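/- arXiv:2211.14083 — 3 statements merged into one kernel-verified Lean document; each statement's English description precedes it below -/
import Mathlib

section
/- Let OM = (E, L) be an oriented matroid with geometric lattice L(OM), and let X ∈ L(OM) be a modular flat. If σ, τ are covectors with z(σ) = z(τ) = Y and σ|_X = τ|_X, then σ|_{X∨Y} = τ|_{X∨Y}. -/
open Classical

/-- Composition of sign vectors: `(σ ∘ τ)_e = σ_e` if `σ_e ≠ 0`, else `τ_e`. -/
def scomp {E : Type*} (σ τ : E → SignType) : E → SignType :=
  fun e => if σ e = 0 then τ e else σ e

/-- The componentwise partial order on sign vectors induced by `0 < +`, `0 < -`. -/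
def svle {E : Type*} (σ τ : E → SignType) : Prop :=
  ∀ e, σ e = 0 ∨ σ e = τ e

/-- The zero set of a sign vector. -/
def zset {E : Type*} (σ : E → SignType) : Set E := {e | σ e = 0}

/-- The separating set `S(σ,τ) = {e : σ_e = -τ_e ≠ 0}` of two sign vectors. -/
def sep {E : Type*} (σ τ : E → SignType) : Set E :=
  {e | σ e ≠ 0 ∧ σ e = -(τ e)}

/-- The covector axioms for an oriented matroid on the ground set `E`. -/
structure IsOrientedMatroid {E : Type*} (L : Set (E → SignType)) : Prop where
  zero_mem : (fun _ => 0) ∈ L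
  neg_mem : ∀ σ ∈ L, (fun e => -(σ e)) ∈ L
  comp_mem : ∀ σ ∈ L, ∀ τ ∈ L, scomp σ τ ∈ L
  elim : ∀ σ ∈ L, ∀ τ ∈ L, ∀ e ∈ sep σ τ,
    ∃ η ∈ L, η e = 0 ∧ ∀ f ∉ sep σ τ, η f = scomp σ τ f

/-- A tope is a maximal covector. -/
def IsTope {E : Type*} (L : Set (E → SignType)) (T : E → SignType) : Prop :=
  T ∈ L ∧ ∀ σ ∈ L, svle T σ → σ = T

/-- Restriction of a sign vector to a subset `A ⊆ E`. -/
def sres {E : Type*} (A : Set E) (σ : E → SignType) : A → SignType :=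
  fun e => σ e

/-- The set of flats (geometric lattice) of an oriented matroid. -/
def flats {E : Type*} (L : Set (E → SignType)) : Set (Set E) :=
  {X | ∃ σ ∈ L, zset σ = X}

/-- The covectors of the localization of `L` at `X ⊆ E`. -/
def loc {E : Type*} (L : Set (E → SignType)) (X : Set E) : Set (X → SignType) :=
  {σ' | ∃ σ ∈ L, sres X σ = σ'}

/-- Extension of a sign vector on `X` to one on `E` using `α` off `X`. -/
noncomputable def sext {E : Type*} (X : Set E) (α : E → SignType) (σ : X → SignType) : E → SignType :=
  fun e => if h : e ∈ X then σ ⟨e, h⟩ else α e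

/-- The join of two flats: the intersection of all flats containing their union. -/
def fjoin {E : Type*} (L : Set (E → SignType)) (X Y : Set E) : Set E :=
  ⋂₀ {Z | Z ∈ flats L ∧ X ∪ Y ⊆ Z}

/-- A flat `X` is modular if `Z ∨ (X ∧ Y) = (Z ∨ X) ∧ Y` for all flats `Z ⊆ Y`. -/
def IsModularFlat {E : Type*} (L : Set (E → SignType)) (X : Set E) : Prop :=
  X ∈ flats L ∧ ∀ Y Z : Set E, Y ∈ flats L → Z ∈ flats L → Z ⊆ Y →
    fjoin L Z (X ∩ Y) = fjoin L Z X ∩ Y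

/-!
Suppose `e ∈ X ∨ Y` with `σ e ≠ τ e`. As `σ` and `τ` have the same zero set `Y`, `e` separates
them, and eliminating `e` gives a covector `η` that vanishes at `e` and agrees with `σ ∘ τ = σ`
off `S(σ, τ)`. Its zero set `Z` is a flat containing `Y`, and `X ∩ Z ⊆ Y` because `σ = τ` on `X`.
Modularity of `X` for `Y ≤ Z` gives `(X ∨ Y) ∩ Z = Y ∨ (X ∩ Z) = Y`, so `e ∈ Y`, i.e. `σ e = 0`,
which contradicts `e ∈ S(σ, τ)`.
-/

section SignVectors

variable {E : Type*} {L : Set (E → SignType)}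

theorem sres_eq_sres_iff {A : Set E} {σ τ : E → SignType} :
    sres A σ = sres A τ ↔ ∀ e ∈ A, σ e = τ e :=
  ⟨fun h e he => congrFun h ⟨e, he⟩, fun h => funext fun e => h e e.2⟩

theorem scomp_eq_left_of_zset_eq {σ τ : E → SignType} (h : zset σ = zset τ) :
    scomp σ τ = σ := by
  funext f
  by_cases hf : σ f = 0
  · have hτf : τ f = 0 := show f ∈ zset τ from h ▸ hf
    simp [scomp, hf, hτf]
  · simp [scomp, hf]

theorem notMem_sep_of_eq {σ τ : E → SignType} {e : E} (h : σ e = τ e) : e ∉ sep σ τ := by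
  rintro ⟨hne, hneg⟩
  rw [h] at hne hneg
  revert hne hneg
  generalize τ e = a
  decide +revert

theorem mem_sep_of_zset_eq {σ τ : E → SignType} (h : zset σ = zset τ) {e : E}
    (hne : σ e ≠ τ e) : e ∈ sep σ τ := by
  have hσe : σ e ≠ 0 := fun h0 => hne (h0.trans (show e ∈ zset τ from h ▸ h0).symm)
  have hτe : τ e ≠ 0 := fun h0 => hσe (show e ∈ zset σ from h ▸ h0)
  refine ⟨hσe, ?_⟩
  revert hσe hτe hne
  generalize σ e = a
  generalize τ e = b
  decide +revert

theorem fjoin_comm (X Y : Set E) : fjoin L X Y = fjoin L Y X := by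
  simp only [fjoin, Set.union_comm]

theorem fjoin_eq_left_of_subset {Y W : Set E} (hY : Y ∈ flats L) (hW : W ⊆ Y) :
    fjoin L Y W = Y :=
  (Set.sInter_subset_of_mem (show Y ∈ {Z | Z ∈ flats L ∧ Y ∪ W ⊆ Z} from
    ⟨hY, Set.union_subset le_rfl hW⟩)).antisymm
    (Set.subset_sInter fun _ hZ => Set.subset_union_left.trans hZ.2)

theorem IsModularFlat.fjoin_inter_subset {X Y Z : Set E} (hX : IsModularFlat L X)
    (hY : Y ∈ flats L) (hZ : Z ∈ flats L) (hYZ : Y ⊆ Z) (hXZ : X ∩ Z ⊆ Y) :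
    fjoin L X Y ∩ Z ⊆ Y := by
  rw [fjoin_comm, ← hX.2 Z Y hZ hY hYZ, fjoin_eq_left_of_subset hY hXZ]

theorem IsOrientedMatroid.exists_flat_of_mem_sep (hL : IsOrientedMatroid L) {X Y : Set E}
    {σ τ : E → SignType} (hσ : σ ∈ L) (hτ : τ ∈ L)
    (hzσ : zset σ = Y) (hzτ : zset τ = Y) (h : ∀ f ∈ X, σ f = τ f) {e : E}
    (he : e ∈ sep σ τ) :
    ∃ Z ∈ flats L, e ∈ Z ∧ Y ⊆ Z ∧ X ∩ Z ⊆ Y := by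
  obtain ⟨η, hη, hηe, hηf⟩ := hL.elim σ hσ τ hτ e he
  have hησ : ∀ f ∉ sep σ τ, η f = σ f := fun f hf => by
    rw [hηf f hf, scomp_eq_left_of_zset_eq (hzσ.trans hzτ.symm)]
  refine ⟨zset η, ⟨η, hη, rfl⟩, hηe, fun f hf => ?_, fun f ⟨hfX, hfZ⟩ => ?_⟩
  · have hσf : σ f = 0 := show f ∈ zset σ from hzσ ▸ hf
    exact (hησ f fun hs => hs.1 hσf).trans hσf
  · rw [← hzσ]
    exact (hησ f (notMem_sep_of_eq (h f hfX))).symm.trans hfZ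

end SignVectors

theorem modular_flat_res_join {E : Type*} {L : Set (E → SignType)}
    (hL : IsOrientedMatroid L) {X Y : Set E} (hX : IsModularFlat L X)
    {σ τ : E → SignType} (hσ : σ ∈ L) (hτ : τ ∈ L)
    (hzσ : zset σ = Y) (hzτ : zset τ = Y) (h : sres X σ = sres X τ) :
    sres (fjoin L X Y) σ = sres (fjoin L X Y) τ := by
  refine sres_eq_sres_iff.2 fun e he => by_contra fun hne => ?_
  have hsep : e ∈ sep σ τ := mem_sep_of_zset_eq (hzσ.trans hzτ.symm) hne
  obtain ⟨Z, hZ, heZ, hYZ, hXZ⟩ :=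
    hL.exists_flat_of_mem_sep hσ hτ hzσ hzτ (sres_eq_sres_iff.1 h) hsep
  have heY : e ∈ Y := hX.fjoin_inter_subset ⟨σ, hσ, hzσ⟩ hZ hYZ hXZ ⟨he, heZ⟩
  exact hsep.1 (show e ∈ zset σ from hzσ ▸ heY)
end

section
/- Let OM = (E, L) be an oriented matroid with topes T, let B be a tope, and define the tope poset T(OM, B) by R ≤ T iff S(B,R) ⊆ S(B,T). Then every convex subset Q ⊆ T containing B is an order ideal of T(OM, B). -/
open Classical

/-- The distance between two topes: the number of separating elements. -/
noncomputable def sdist {E : Type*} (σ τ : E → SignType) : ℕ := (sep σ τ).ncard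

/-- A set of topes is convex iff it is closed under topes lying "between" two
of its members with respect to the distance. -/
def IsConvexTopes {E : Type*} (L Q : Set (E → SignType)) : Prop :=
  (∀ T ∈ Q, IsTope L T) ∧
  ∀ T ∈ Q, ∀ R ∈ Q, ∀ Q' : E → SignType, IsTope L Q' →
    sdist T Q' + sdist Q' R = sdist T R → Q' ∈ Q

/-- The Salvetti poset: pairs `(σ, T)` with `T` a tope and `σ ≤ T`. -/
def Sal {E : Type*} (L : Set (E → SignType)) : Set ((E → SignType) × (E → SignType)) :=
  {p | IsTope L p.2 ∧ svle p.1 p.2}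

/-- The order relation of the Salvetti poset:
`(σ,T) ≤ (τ,R)` iff `τ ≤ σ` and `σ ∘ R = T`. -/
def salle {E : Type*} (p q : (E → SignType) × (E → SignType)) : Prop :=
  svle q.1 p.1 ∧ scomp p.1 q.2 = p.2

/-!
Topes have a common zero set: composing a tope with any covector gives a covector above it,
which by maximality is the tope itself. Hence if `S(B,R) ⊆ S(B,T)`, then `S(B,T)` is the disjoint
union of `S(B,R)` and `S(R,T)`, so `R` lies on a shortest path from `B` to `T`, and convexity of `Q`
puts `R` in `Q`.
-/

lemma svle_scomp {E : Type*} (σ τ : E → SignType) : svle σ (scomp σ τ) := by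
  intro e
  by_cases h : σ e = 0
  · exact Or.inl h
  · exact Or.inr (by simp [scomp, h])

lemma IsTope.eq_zero_of_eq_zero {E : Type*} {L : Set (E → SignType)} (hL : IsOrientedMatroid L)
    {P S : E → SignType} (hP : IsTope L P) (hS : S ∈ L) {e : E} (he : P e = 0) : S e = 0 := by
  have hcomp : scomp P S = P := hP.2 _ (hL.comp_mem P hP.1 S hS) (svle_scomp P S)
  simpa [scomp, he] using congrFun hcomp e

lemma IsTope.eq_zero_iff {E : Type*} {L : Set (E → SignType)} (hL : IsOrientedMatroid L)
    {P R : E → SignType} (hP : IsTope L P) (hR : IsTope L R) (e : E) : P e = 0 ↔ R e = 0 :=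
  ⟨hP.eq_zero_of_eq_zero hL hR.1, hR.eq_zero_of_eq_zero hL hP.1⟩

section SignVectors

variable {E : Type*} {B R T : E → SignType}

lemma disjoint_sep_of_sep_subset (hsub : sep B R ⊆ sep B T) : Disjoint (sep B R) (sep R T) := by
  rw [Set.disjoint_left]
  rintro e hBR ⟨hR, hRT⟩
  obtain ⟨hB, hBT⟩ := hsub hBR
  have hBR' : B e = -(R e) := hBR.2
  rw [hRT] at hBR'
  revert hB hBT hBR'
  cases B e <;> cases T e <;> decide

lemma sep_eq_union_of_sep_subset (hzero : ∀ e, B e = 0 ↔ R e = 0) (hsub : sep B R ⊆ sep B T) :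
    sep B T = sep B R ∪ sep R T := by
  ext e
  have hzero_e := hzero e
  have hsub_e : e ∈ sep B R → e ∈ sep B T := @hsub e
  simp only [sep, Set.mem_union, Set.mem_ofPred_eq] at hsub_e ⊢
  revert hzero_e hsub_e
  cases B e <;> cases R e <;> cases T e <;> decide

lemma sdist_add_sdist_of_sep_subset [Finite E] (hzero : ∀ e, B e = 0 ↔ R e = 0)
    (hsub : sep B R ⊆ sep B T) : sdist B R + sdist R T = sdist B T := by
  rw [sdist, sdist, sdist, sep_eq_union_of_sep_subset hzero hsub,
    Set.ncard_union_eq (disjoint_sep_of_sep_subset hsub)]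

end SignVectors

theorem convex_topes_orderIdeal {E : Type*} [Fintype E] {L : Set (E → SignType)}
    (hL : IsOrientedMatroid L) {Q : Set (E → SignType)} (hQ : IsConvexTopes L Q)
    {B : E → SignType} (hB : B ∈ Q) :
    ∀ T ∈ Q, ∀ R : E → SignType, IsTope L R → sep B R ⊆ sep B T → R ∈ Q := by
  intro T hT R hR hsub
  have hzero : ∀ e, B e = 0 ↔ R e = 0 := (hQ.1 B hB).eq_zero_iff hL hR
  exact hQ.2 B hB T hT R hR (sdist_add_sdist_of_sep_subset hzero hsub)
end

section
/- Let OM = (E, L) be an oriented matroid, X a flat, and α a covector with z(α) = X. Then the map ι̃_α from the Salvetti poset of the localization OM|_X to the Salvetti poset of OM, defined by (σ', T') ↦ (ι_α(σ'), ι_α(T')), is a well-defined order preserving section of the induced localization map ρ̃_X : (σ,T) ↦ (σ|_X, (σ∘T)|_X componentwise, i.e., (σ|_X, T|_X)). -/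
open Classical

/-! The extension `ι_α = sext X α` inverts the restriction `ρ_X = sres X`, and it is monotone and
commutes with composition because it pads every sign vector with the same `α`. Since `α` vanishes
exactly on `X`, the extension of `σ|_X` is the covector `α ∘ σ`; and a covector above `ι_α T'` for a
tope `T'` of the localization agrees with `α` off `X` and with `T'` on `X`, so `ι_α T'` is a tope. -/

section SignVectorExtension

variable {E : Type*} {X : Set E} {α : E → SignType}

theorem sres_sext (σ : X → SignType) : sres X (sext X α σ) = σ := by
  funext e
  simp [sres, sext, e.2]

theorem svle_sres {σ τ : E → SignType} (h : svle σ τ) : svle (sres X σ) (sres X τ) :=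
  fun e => h e

theorem svle_sext {σ τ : X → SignType} (h : svle σ τ) : svle (sext X α σ) (sext X α τ) := by
  intro e
  by_cases he : e ∈ X
  · simpa [sext, he] using h ⟨e, he⟩
  · simp [sext, he]

theorem scomp_sext (σ τ : X → SignType) :
    scomp (sext X α σ) (sext X α τ) = sext X α (scomp σ τ) := by
  funext e
  by_cases he : e ∈ X <;> simp [scomp, sext, he]

theorem svle.eq_of_ne_zero {σ τ : E → SignType} (h : svle σ τ) {e : E} (he : σ e ≠ 0) :
    τ e = σ e :=
  ((h e).resolve_left he).symm

theorem sext_sres_of_eq_off {τ : E → SignType} (hτ : ∀ e ∉ X, τ e = α e) :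
    sext X α (sres X τ) = τ := by
  funext e
  by_cases he : e ∈ X
  · simp [sext, sres, he]
  · simp [sext, he, hτ e he]

theorem sext_sres_eq_scomp (hX : zset α = X) (σ : E → SignType) :
    sext X α (sres X σ) = scomp α σ := by
  subst hX
  funext e
  by_cases he : α e = 0
  · simp [sext, sres, scomp, zset, he]
  · simp [sext, scomp, zset, he]

variable {L : Set (E → SignType)}

theorem sext_mem_of_mem_loc (hL : IsOrientedMatroid L) (hα : α ∈ L) (hX : zset α = X)
    {σ : X → SignType} (hσ : σ ∈ loc L X) : sext X α σ ∈ L := by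
  obtain ⟨τ, hτ, rfl⟩ := hσ
  rw [sext_sres_eq_scomp hX]
  exact hL.comp_mem α hα τ hτ

theorem isTope_sext (hL : IsOrientedMatroid L) (hα : α ∈ L) (hX : zset α = X)
    {T : X → SignType} (hT : IsTope (loc L X) T) : IsTope L (sext X α T) := by
  refine ⟨sext_mem_of_mem_loc hL hα hX hT.1, fun τ hτ hle => ?_⟩
  have hres : sres X τ = T := by
    refine hT.2 _ ⟨τ, hτ, rfl⟩ ?_
    simpa only [sres_sext] using svle_sres (X := X) hle
  have hoff : ∀ e ∉ X, τ e = α e := fun e he => by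
    have hαe : α e ≠ 0 := fun h => he (hX ▸ h)
    simpa [sext, he] using hle.eq_of_ne_zero (e := e) (by simpa [sext, he] using hαe)
  rw [← sext_sres_of_eq_off hoff, hres]

end SignVectorExtension

theorem sal_ext_section {E : Type*} {L : Set (E → SignType)}
    (hL : IsOrientedMatroid L) {α : E → SignType} (hα : α ∈ L) {X : Set E}
    (hX : zset α = X) :
    (∀ p ∈ Sal (loc L X), (sext X α p.1, sext X α p.2) ∈ Sal L) ∧
    (∀ p ∈ Sal (loc L X), ∀ q ∈ Sal (loc L X), salle p q →
      salle (sext X α p.1, sext X α p.2) (sext X α q.1, sext X α q.2)) ∧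
    (∀ p ∈ Sal (loc L X), (sres X (sext X α p.1), sres X (sext X α p.2)) = p) := by
  refine ⟨?_, ?_, ?_⟩
  · rintro p ⟨hT, hle⟩
    exact ⟨isTope_sext hL hα hX hT, svle_sext hle⟩
  · rintro p - q - ⟨hle, hcomp⟩
    exact ⟨svle_sext hle, by rw [scomp_sext, hcomp]⟩
  · rintro ⟨σ, T⟩ -
    simp only [sres_sext]
end
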